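/- Let n ≥ 4, let L be the permutation group induced by Sym(n) on ordered pairs of distinct elements of {1,…,n}, let (Γ,G) be a locally L pair, let {x,y} be an edge of Γ, and let p be a prime with (n,p) ∈ {(4,2),(5,3),(6,2)} such that G_{xy}^{[1]} is a nontrivial p-group. For each vertex v let Q_v denote the largest normal p-subgroup of G_v^{[1]}, assume C_{G_v^{[1]}}(Q_v) ≤ Q_v for every vertex v, and let S_{xy} denote the largest normal p-subgroup of G_{xy}, assumed to satisfy C_{G_{xy}}(S_{xy}) ≤ S_{xy}. Then S_{xy} = Q_x Q_y. -/

import Mathlib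

open MulAction Pointwise

/-- The set of ordered pairs of distinct elements of `{1,…,n}`. -/
abbrev OPairs (n : ℕ) : Type := {p : Fin n × Fin n // p.1 ≠ p.2}

/-- `Sym(n)` acts on the ordered pairs of distinct elements. -/
instance opairsAction (n : ℕ) : MulAction (Equiv.Perm (Fin n)) (OPairs n) where
  smul σ p := ⟨(σ p.1.1, σ p.1.2), fun h => p.2 (σ.injective h)⟩
  one_smul p := rfl
  mul_smul σ τ p := rfl

/-- Every element of `G` is an automorphism of `Γ`. -/
def PreservesAdj {V : Type*} (Γ : SimpleGraph V) (G : Subgroup (Equiv.Perm V)) : Prop :=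
  ∀ g ∈ G, ∀ u v : V, Γ.Adj u v ↔ Γ.Adj (g u) (g v)

/-- The pointwise stabiliser in `G` of the ball of radius `i` around `x`. -/
def ballStab {V : Type*} (Γ : SimpleGraph V) (G : Subgroup (Equiv.Perm V)) (x : V) (i : ℕ) :
    Subgroup G :=
  ⨅ (v : V) (_ : Γ.dist x v ≤ i), MulAction.stabilizer G v

/-- `(Γ, G)` is a locally `L` pair, for `L` the permutation group induced by `Sym(n)` on
ordered pairs of distinct elements of `{1,…,n}`. -/
def IsLocallyOPairs (n : ℕ) {V : Type*} (Γ : SimpleGraph V) (G : Subgroup (Equiv.Perm V)) :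
    Prop :=
  PreservesAdj Γ G ∧ MulAction.IsPretransitive G V ∧
  ∀ x : V, ∃ (e : Γ.neighborSet x ≃ OPairs n)
      (φ : MulAction.stabilizer G x →* Equiv.Perm (Fin n)),
    Function.Surjective φ ∧
    ∀ (g : MulAction.stabilizer G x) (v : Γ.neighborSet x),
      ((e.symm (φ g • e v) : Γ.neighborSet x) : V) = g • (v : V)

/-! Write `K = G_x^{[1]} ∩ G_y^{[1]}`. Uniqueness of the largest normal `p`-subgroup gives
`Q_{g v} = g Q_v g⁻¹`, so `Q_x` and `Q_y` are normal `p`-subgroups of `G_{xy}` and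
`Q_x Q_y ⊆ S_{xy}`; likewise `S_{xy} ∩ G_x^{[1]} ≤ Q_x` and `K ≤ Q_x ∩ Q_y`.

The kernel of the action of `G_x` on `Γ(x)` is `G_x^{[1]}`, and `G_{xy}` maps onto the
stabiliser of a pair in `Sym(n)`, that is onto `Sym(n-2)` with
`(n-2, p) ∈ {(2,2), (3,3), (4,2)}`. There every nontrivial normal `p`-subgroup is `O_p`
(`Sym(2)`, `A_3`, `V_4`), so it contains every normal `p`-subgroup. Hence, if `Q_y` acts
nontrivially on `Γ(x)`, the image of `S_{xy}` lies in that of `Q_y`, and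
`S_{xy} ⊆ (S_{xy} ∩ G_x^{[1]}) Q_y ⊆ Q_x Q_y`.

If `Q_y` acted trivially on `Γ(x)`, then `Q_y ≤ K ≤ Q_x`, and an element of `G` swapping `x`
and `y` gives `Q_x = Q_y`. By arc-transitivity and connectedness all `Q_v` then coincide, so
they fix every vertex and are trivial, contradicting `K ≠ 1`. -/

open Equiv

section ConjugateCandidates

variable {K K' : Type*} [Group K] [Group K'] {q : ℕ}

/-- A necessary condition for `u` to lie in a normal subgroup of `K` of exponent dividing `q`. -/
def IsNormalExponentCandidate (q : ℕ) (u : K) : Prop :=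
  u ^ q = 1 ∧ ∀ g : K, (g * u * g⁻¹ * u) ^ q = 1

def NormalExponentCandidatesConj (q : ℕ) (K : Type*) [Group K] : Prop :=
  ∀ u : K, u ≠ 1 → IsNormalExponentCandidate q u →
    ∀ v : K, v ≠ 1 → IsNormalExponentCandidate q v → IsConj u v

theorem isNormalExponentCandidate_of_mem {N : Subgroup K} [N.Normal] (hN : ∀ x ∈ N, x ^ q = 1)
    {u : K} (hu : u ∈ N) : IsNormalExponentCandidate q u :=
  ⟨hN u hu, fun g => hN _ (mul_mem (Subgroup.Normal.conj_mem ‹_› u hu g) hu)⟩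

theorem IsNormalExponentCandidate.map {u : K} (hu : IsNormalExponentCandidate q u) {f : K →* K'}
    (hf : Function.Surjective f) : IsNormalExponentCandidate q (f u) := by
  refine ⟨by rw [← map_pow, hu.1, map_one], fun g' => ?_⟩
  obtain ⟨g, rfl⟩ := hf g'
  rw [← map_inv, ← map_mul, ← map_mul, ← map_mul, ← map_pow, hu.2 g, map_one]

theorem NormalExponentCandidatesConj.of_mulEquiv (h : NormalExponentCandidatesConj q K)
    (e : K ≃* K') : NormalExponentCandidatesConj q K' := by
  intro u hu hcu v hv hcv
  have hconj := h (e.symm u) (by simpa using hu)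
    (hcu.map (f := e.symm.toMonoidHom) e.symm.surjective) (e.symm v) (by simpa using hv)
    (hcv.map (f := e.symm.toMonoidHom) e.symm.surjective)
  simpa using e.toMonoidHom.map_isConj hconj

theorem Subgroup.le_of_normalExponentCandidatesConj (hK : NormalExponentCandidatesConj q K)
    {N M : Subgroup K} [N.Normal] [M.Normal] (hN : ∀ x ∈ N, x ^ q = 1)
    (hM : ∀ x ∈ M, x ^ q = 1) (hM1 : M ≠ ⊥) : N ≤ M := by
  obtain ⟨u, huM, hu⟩ := M.bot_or_exists_ne_one.resolve_left hM1
  intro v hvN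
  rcases eq_or_ne v 1 with rfl | hv
  · exact M.one_mem
  obtain ⟨c, rfl⟩ := isConj_iff.mp (hK u hu (isNormalExponentCandidate_of_mem hM huM)
    v hv (isNormalExponentCandidate_of_mem hN hvN))
  exact Subgroup.Normal.conj_mem ‹_› u huM c

theorem IsPGroup.pow_eq_one_of_card_eq_mul [Finite K] {p r : ℕ} (hcard : Nat.card K = q * r)
    (hpr : p.Coprime r) {N : Subgroup K} (hN : IsPGroup p N) {x : K} (hx : x ∈ N) :
    x ^ q = 1 := by
  obtain ⟨k, hk⟩ := hN ⟨x, hx⟩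
  have hxk : x ^ p ^ k = 1 := by simpa using congrArg Subtype.val hk
  have hcop : (orderOf x).Coprime r :=
    (hpr.pow_left k).coprime_dvd_left (orderOf_dvd_of_pow_eq_one hxk)
  exact orderOf_dvd_iff_pow_eq_one.mp (hcop.dvd_of_dvd_mul_right (hcard ▸ orderOf_dvd_natCard x))

end ConjugateCandidates

set_option maxRecDepth 10000 in
theorem Equiv.Perm.le_of_normal_of_isPGroup {α : Type*} [Fintype α] [DecidableEq α] {p : ℕ}
    (hαp : (Fintype.card α = 2 ∧ p = 2) ∨ (Fintype.card α = 3 ∧ p = 3) ∨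
      (Fintype.card α = 4 ∧ p = 2))
    {N M : Subgroup (Perm α)} [N.Normal] [M.Normal] (hN : IsPGroup p N) (hM : IsPGroup p M)
    (hM1 : M ≠ ⊥) : N ≤ M := by
  obtain ⟨q, r, hcard, hpr, hconj⟩ : ∃ q r, Nat.card (Perm α) = q * r ∧ p.Coprime r ∧
      NormalExponentCandidatesConj q (Perm (Fin (Fintype.card α))) := by
    rw [Nat.card_perm, Nat.card_eq_fintype_card]
    unfold NormalExponentCandidatesConj IsNormalExponentCandidate
    simp only [isConj_iff]
    -- `q` is the `p`-part of `(card α)!`; the nontrivial candidates are the transposition of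
    -- `Sym(2)`, the 3-cycles of `Sym(3)` and the double transpositions of `Sym(4)`.
    rcases hαp with ⟨h, rfl⟩ | ⟨h, rfl⟩ | ⟨h, rfl⟩ <;> rw [h]
    · exact ⟨2, 1, rfl, by norm_num, by decide⟩
    · exact ⟨3, 2, rfl, by norm_num, by decide⟩
    · exact ⟨8, 3, rfl, by norm_num, by decide⟩
  exact Subgroup.le_of_normalExponentCandidatesConj
    (hconj.of_mulEquiv (Fintype.equivFin α).symm.permCongrHom)
    (fun _ => hN.pow_eq_one_of_card_eq_mul hcard hpr)
    (fun _ => hM.pow_eq_one_of_card_eq_mul hcard hpr) hM1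

section NormalPSubgroupOf

variable {G G' : Type*} [Group G] [Group G'] {p : ℕ}

structure IsNormalPSubgroupOf (p : ℕ) (K T : Subgroup G) : Prop where
  le : T ≤ K
  isPGroup : IsPGroup p T
  conj_mem : ∀ g ∈ K, ∀ k ∈ T, g * k * g⁻¹ ∈ T

namespace IsNormalPSubgroupOf

variable {K T : Subgroup G}

theorem map (h : IsNormalPSubgroupOf p K T) (f : G →* G') :
    IsNormalPSubgroupOf p (K.map f) (T.map f) where
  le := Subgroup.map_mono h.le
  isPGroup := h.isPGroup.map f
  conj_mem := by
    rintro _ ⟨g, hg, rfl⟩ _ ⟨k, hk, rfl⟩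
    exact ⟨g * k * g⁻¹, h.conj_mem g hg k hk, by simp⟩

theorem comap (h : IsNormalPSubgroupOf p K T) {f : G' →* G} (hf : Function.Injective f) :
    IsNormalPSubgroupOf p (K.comap f) (T.comap f) where
  le := Subgroup.comap_mono h.le
  isPGroup := h.isPGroup.comap_of_injective f hf
  conj_mem g hg k hk := by simpa using h.conj_mem _ hg _ hk

theorem inf (h : IsNormalPSubgroupOf p K T) {L : Subgroup G} (hLK : L ≤ K) :
    IsNormalPSubgroupOf p L (T ⊓ L) where
  le := inf_le_right
  isPGroup := h.isPGroup.to_le inf_le_left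
  conj_mem g hg k hk := by
    rw [Subgroup.mem_inf] at hk ⊢
    exact ⟨h.conj_mem g (hLK hg) k hk.1, mul_mem (mul_mem hg hk.2) (inv_mem hg)⟩

theorem normal (h : IsNormalPSubgroupOf p ⊤ T) : T.Normal :=
  ⟨fun k hk g => h.conj_mem g trivial k hk⟩

end IsNormalPSubgroupOf

theorem IsGreatest.map_isNormalPSubgroupOf {K Q : Subgroup G}
    (h : IsGreatest {T | IsNormalPSubgroupOf p K T} Q) (e : G ≃* G') :
    IsGreatest {T | IsNormalPSubgroupOf p (K.map e.toMonoidHom) T} (Q.map e.toMonoidHom) := by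
  refine ⟨h.1.map _, fun R hR => ?_⟩
  have hK : (K.map e.toMonoidHom).map e.symm.toMonoidHom = K := by
    rw [Subgroup.map_map]; simp
  have := h.2 (hK ▸ hR.map e.symm.toMonoidHom)
  rwa [Subgroup.map_equiv_eq_comap_symm', ← Subgroup.map_le_iff_le_comap]

end NormalPSubgroupOf

namespace OPairs

variable {n : ℕ}

theorem smul_eq_self_iff {σ : Perm (Fin n)} {ω : OPairs n} :
    σ • ω = ω ↔ σ ω.1.1 = ω.1.1 ∧ σ ω.1.2 = ω.1.2 := by
  rw [Subtype.ext_iff, Prod.ext_iff]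
  rfl

theorem eq_one_of_forall_smul_eq {σ : Perm (Fin n)} (h : ∀ ω : OPairs n, σ • ω = ω) :
    σ = 1 := by
  ext i
  by_cases hi : ∃ j, j ≠ i
  · obtain ⟨j, hj⟩ := hi
    rw [(smul_eq_self_iff.mp (h ⟨(i, j), hj.symm⟩)).1]
    rfl
  · simp only [ne_eq, not_exists, not_not] at hi
    rw [hi (σ i)]
    rfl

theorem exists_smul_eq (ω ω' : OPairs n) : ∃ σ : Perm (Fin n), σ • ω = ω' := by
  obtain ⟨⟨a, b⟩, hab⟩ := ω
  obtain ⟨⟨c, d⟩, hcd⟩ := ω'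
  have hc : c ≠ swap a c b := fun h =>
    hab ((swap_apply_eq_iff.mp h.symm).trans (swap_apply_right a c)).symm
  refine ⟨swap (swap a c b) d * swap a c, Subtype.ext (Prod.ext ?_ ?_)⟩
  · show swap (swap a c b) d (swap a c a) = c
    rw [swap_apply_left, swap_apply_of_ne_of_ne hc hcd]
  · show swap (swap a c b) d (swap a c b) = d
    rw [swap_apply_left]

theorem range_ofSubtype (ω : OPairs n) :
    (Perm.ofSubtype : Perm {i // i ≠ ω.1.1 ∧ i ≠ ω.1.2} →* Perm (Fin n)).range =
      stabilizer (Perm (Fin n)) ω := by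
  ext σ
  rw [Perm.mem_range_ofSubtype_iff, mem_stabilizer_iff, smul_eq_self_iff]
  simp only [Set.subset_def, Finset.mem_coe, Perm.mem_support, Set.mem_ofPred_eq]
  constructor
  · intro h
    exact ⟨by_contra fun ha => (h _ ha).1 rfl, by_contra fun hb => (h _ hb).2 rfl⟩
  · rintro ⟨ha, hb⟩ i hi
    exact ⟨fun h => hi (h ▸ ha), fun h => hi (h ▸ hb)⟩

theorem card_compl (ω : OPairs n) : Fintype.card {i // i ≠ ω.1.1 ∧ i ≠ ω.1.2} = n - 2 := by
  have h : (Finset.univ.filter fun i => i ≠ ω.1.1 ∧ i ≠ ω.1.2) = {ω.1.1, ω.1.2}ᶜ := by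
    ext i
    simp
  rw [Fintype.card_subtype, h, Finset.card_compl, Finset.card_pair ω.2, Fintype.card_fin]

theorem le_of_isNormalPSubgroupOf {p : ℕ}
    (hnp : (n = 4 ∧ p = 2) ∨ (n = 5 ∧ p = 3) ∨ (n = 6 ∧ p = 2)) (ω : OPairs n)
    {N M : Subgroup (Perm (Fin n))} (hN : IsNormalPSubgroupOf p (stabilizer (Perm (Fin n)) ω) N)
    (hM : IsNormalPSubgroupOf p (stabilizer (Perm (Fin n)) ω) M) (hM1 : M ≠ ⊥) : N ≤ M := by
  rw [← range_ofSubtype] at hN hM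
  have hN' := hN.comap (Perm.ofSubtype_injective (p := fun i => i ≠ ω.1.1 ∧ i ≠ ω.1.2))
  have hM' := hM.comap (Perm.ofSubtype_injective (p := fun i => i ≠ ω.1.1 ∧ i ≠ ω.1.2))
  rw [MonoidHom.comap_range_self] at hN' hM'
  have := hN'.normal
  have := hM'.normal
  rw [← Subgroup.comap_le_comap_of_le_range hN.le]
  refine Perm.le_of_normal_of_isPGroup (by rw [card_compl]; omega) hN'.isPGroup hM'.isPGroup ?_
  intro h
  rw [← Subgroup.map_comap_eq_self hM.le, h, Subgroup.map_bot] at hM1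
  exact hM1 rfl

end OPairs

section Graph

variable {V : Type*} {Γ : SimpleGraph V} {G : Subgroup (Perm V)}

theorem mem_ballStab_one_iff (hconn : Γ.Connected) {g : G} {v : V} :
    g ∈ ballStab Γ G v 1 ↔ g • v = v ∧ ∀ w, Γ.Adj v w → g • w = w := by
  simp only [ballStab, Subgroup.mem_iInf, mem_stabilizer_iff]
  constructor
  · intro h
    exact ⟨h v (by simp), fun w hw => h w (SimpleGraph.dist_eq_one_iff_adj.mpr hw).le⟩
  · rintro ⟨hv, hadj⟩ w hw
    rcases Nat.le_one_iff_eq_zero_or_eq_one.mp hw with h0 | h1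
    · rwa [← hconn.dist_eq_zero_iff.mp h0]
    · exact hadj w (SimpleGraph.dist_eq_one_iff_adj.mp h1)

theorem ballStab_one_le_stabilizer_self (hconn : Γ.Connected) (v : V) :
    ballStab Γ G v 1 ≤ stabilizer G v :=
  fun _ hg => ((mem_ballStab_one_iff hconn).mp hg).1

theorem ballStab_one_le_stabilizer_of_adj (hconn : Γ.Connected) {v w : V} (hvw : Γ.Adj v w) :
    ballStab Γ G v 1 ≤ stabilizer G w :=
  fun _ hg => ((mem_ballStab_one_iff hconn).mp hg).2 w hvw

theorem PreservesAdj.adj_smul_iff (hA : PreservesAdj Γ G) (g : G) {u w : V} :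
    Γ.Adj (g • u) (g • w) ↔ Γ.Adj u w :=
  (hA g g.2 u w).symm

theorem conj_mem_ballStab_one (hA : PreservesAdj Γ G) (hconn : Γ.Connected) {v : V} {h : G}
    (hh : h ∈ ballStab Γ G v 1) (g : G) : g * h * g⁻¹ ∈ ballStab Γ G (g • v) 1 := by
  rw [mem_ballStab_one_iff hconn] at hh ⊢
  refine ⟨by rw [mul_smul, mul_smul, inv_smul_smul, hh.1], fun w hw => ?_⟩
  have hadj : Γ.Adj v (g⁻¹ • w) := by
    rwa [← hA.adj_smul_iff g, smul_inv_smul]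
  rw [mul_smul, mul_smul, hh.2 _ hadj, smul_inv_smul]

theorem map_conj_ballStab_one (hA : PreservesAdj Γ G) (hconn : Γ.Connected) (g : G) (v : V) :
    (ballStab Γ G v 1).map (MulAut.conj g).toMonoidHom = ballStab Γ G (g • v) 1 := by
  ext k
  rw [Subgroup.mem_map_equiv, MulAut.conj_symm_apply]
  constructor
  · intro hk
    simpa [mul_assoc] using conj_mem_ballStab_one hA hconn hk g
  · intro hk
    simpa using conj_mem_ballStab_one hA hconn hk g⁻¹

end Graph

section LocalAction

variable {V : Type*} {Γ : SimpleGraph V} {G : Subgroup (Perm V)} {n : ℕ}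

theorem IsLocallyOPairs.exists_smul_eq_of_adj (hloc : IsLocallyOPairs n Γ G) {x y u w : V}
    (hxy : Γ.Adj x y) (huw : Γ.Adj u w) : ∃ g : G, g • x = u ∧ g • y = w := by
  obtain ⟨hA, htrans, hlocal⟩ := hloc
  obtain ⟨t, rfl⟩ := htrans.exists_smul_eq x u
  obtain ⟨e, φ, hsurj, hφ⟩ := hlocal (t • x)
  have hty : Γ.Adj (t • x) (t • y) := (hA.adj_smul_iff t).mpr hxy
  obtain ⟨σ, hσ⟩ := OPairs.exists_smul_eq (e ⟨t • y, hty⟩) (e ⟨w, huw⟩)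
  obtain ⟨h, rfl⟩ := hsurj σ
  refine ⟨h * t, by rw [mul_smul]; exact h.2, ?_⟩
  have := hφ h ⟨t • y, hty⟩
  rw [hσ, e.symm_apply_apply] at this
  rw [mul_smul]
  exact this.symm

variable {x : V} {e : Γ.neighborSet x ≃ OPairs n} {φ : stabilizer G x →* Perm (Fin n)}
  (hφ : ∀ (g : stabilizer G x) (v : Γ.neighborSet x),
    ((e.symm (φ g • e v) : Γ.neighborSet x) : V) = g • (v : V))
include hφ

theorem smul_eq_self_iff_map_smul_eq_self (g : stabilizer G x) (v : Γ.neighborSet x) :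
    g • (v : V) = v ↔ φ g • e v = e v := by
  rw [← hφ, Subtype.coe_inj, e.symm_apply_eq]

theorem map_eq_one_iff_mem_ballStab (hconn : Γ.Connected) (g : stabilizer G x) :
    φ g = 1 ↔ (g : G) ∈ ballStab Γ G x 1 := by
  rw [mem_ballStab_one_iff hconn]
  constructor
  · intro h1
    refine ⟨g.2, fun w hw => ?_⟩
    exact (smul_eq_self_iff_map_smul_eq_self hφ g ⟨w, hw⟩).mpr (by rw [h1, one_smul])
  · rintro ⟨-, hadj⟩
    refine OPairs.eq_one_of_forall_smul_eq fun ω => ?_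
    obtain ⟨v, rfl⟩ := e.surjective ω
    exact (smul_eq_self_iff_map_smul_eq_self hφ g v).mp (hadj v v.2)

theorem map_subgroupOf_stabilizer (hsurj : Function.Surjective φ) {y : V} (hxy : Γ.Adj x y) :
    ((stabilizer G x ⊓ stabilizer G y).subgroupOf (stabilizer G x)).map φ =
      stabilizer (Perm (Fin n)) (e ⟨y, hxy⟩) := by
  have hmem (g : stabilizer G x) :
      (g : G) ∈ stabilizer G y ↔ φ g • e ⟨y, hxy⟩ = e ⟨y, hxy⟩ :=
    mem_stabilizer_iff.trans (smul_eq_self_iff_map_smul_eq_self hφ g ⟨y, hxy⟩)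
  ext σ
  simp only [Subgroup.mem_map, Subgroup.mem_subgroupOf, Subgroup.mem_inf, mem_stabilizer_iff]
  constructor
  · rintro ⟨g, ⟨-, hgy⟩, rfl⟩
    exact (hmem g).mp hgy
  · intro hσ
    obtain ⟨g, rfl⟩ := hsurj σ
    exact ⟨g, ⟨g.2, (hmem g).mpr hσ⟩, rfl⟩

theorem exists_mem_mul_inv_mem_ballStab (hconn : Γ.Connected) (hsurj : Function.Surjective φ)
    {y : V} (hxy : Γ.Adj x y) {p : ℕ}
    (hnp : (n = 4 ∧ p = 2) ∨ (n = 5 ∧ p = 3) ∨ (n = 6 ∧ p = 2)) {S R : Subgroup G}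
    (hS : IsNormalPSubgroupOf p (stabilizer G x ⊓ stabilizer G y) S)
    (hR : IsNormalPSubgroupOf p (stabilizer G x ⊓ stabilizer G y) R)
    (hRx : ¬ R ≤ ballStab Γ G x 1) {s : G} (hs : s ∈ S) :
    ∃ r ∈ R, s * r⁻¹ ∈ ballStab Γ G x 1 := by
  have himage {T : Subgroup G} (hT : IsNormalPSubgroupOf p (stabilizer G x ⊓ stabilizer G y) T) :
      IsNormalPSubgroupOf p (stabilizer (Perm (Fin n)) (e ⟨y, hxy⟩))
        ((T.subgroupOf (stabilizer G x)).map φ) :=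
    map_subgroupOf_stabilizer hφ hsurj hxy ▸ (hT.comap (Subgroup.subtype_injective _)).map φ
  have hne : (R.subgroupOf (stabilizer G x)).map φ ≠ ⊥ := by
    obtain ⟨r, hrR, hrx⟩ := SetLike.not_le_iff_exists.mp hRx
    intro hbot
    have hr : φ ⟨r, (hR.le hrR).1⟩ ∈ (R.subgroupOf (stabilizer G x)).map φ :=
      ⟨_, hrR, rfl⟩
    rw [hbot, Subgroup.mem_bot, map_eq_one_iff_mem_ballStab hφ hconn] at hr
    exact hrx hr
  have hsx : s ∈ stabilizer G x := (hS.le hs).1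
  obtain ⟨r, hrR, hr⟩ := OPairs.le_of_isNormalPSubgroupOf hnp _ (himage hS) (himage hR) hne
    ⟨⟨s, hsx⟩, hs, rfl⟩
  refine ⟨r, hrR, (map_eq_one_iff_mem_ballStab hφ hconn (⟨s, hsx⟩ * r⁻¹)).mp ?_⟩
  rw [map_mul, map_inv, hr, mul_inv_cancel]

end LocalAction

section LargestNormalPSubgroup

variable {V : Type*} {Γ : SimpleGraph V} {G : Subgroup (Perm V)} {p : ℕ} {Q : V → Subgroup G}
  (hA : PreservesAdj Γ G) (hconn : Γ.Connected)
  (hQ : ∀ v, IsGreatest {T | IsNormalPSubgroupOf p (ballStab Γ G v 1) T} (Q v))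
include hA hconn hQ

theorem map_conj_eq_of_isGreatest (g : G) (v : V) :
    (Q v).map (MulAut.conj g).toMonoidHom = Q (g • v) :=
  ((hQ v).map_isNormalPSubgroupOf (MulAut.conj g)).unique
    (map_conj_ballStab_one hA hconn g v ▸ hQ (g • v))

theorem isNormalPSubgroupOf_stabilizer_inf {x y : V} (hxy : Γ.Adj x y) :
    IsNormalPSubgroupOf p (stabilizer G x ⊓ stabilizer G y) (Q x) where
  le := le_inf ((hQ x).1.le.trans (ballStab_one_le_stabilizer_self hconn x))
    ((hQ x).1.le.trans (ballStab_one_le_stabilizer_of_adj hconn hxy))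
  isPGroup := (hQ x).1.isPGroup
  conj_mem g hg k hk := by
    have := Subgroup.mem_map_of_mem (MulAut.conj g).toMonoidHom hk
    rwa [map_conj_eq_of_isGreatest hA hconn hQ g x, mem_stabilizer_iff.mp hg.1] at this

theorem ballStab_inf_le_of_isGreatest {x y : V} (hxy : Γ.Adj x y)
    (hp : IsPGroup p ↥(ballStab Γ G x 1 ⊓ ballStab Γ G y 1)) :
    ballStab Γ G x 1 ⊓ ballStab Γ G y 1 ≤ Q x :=
  (hQ x).2
    { le := inf_le_left
      isPGroup := hp
      conj_mem := fun g hg k hk => by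
        rw [Subgroup.mem_inf] at hk ⊢
        refine ⟨mul_mem (mul_mem hg hk.1) (inv_mem hg), ?_⟩
        have := conj_mem_ballStab_one hA hconn hk.2 g
        rwa [mem_stabilizer_iff.mp (ballStab_one_le_stabilizer_of_adj hconn hxy hg)] at this }

theorem eq_bot_of_isGreatest_of_eq {n : ℕ} (hloc : IsLocallyOPairs n Γ G) {x y : V}
    (hxy : Γ.Adj x y) (h : Q x = Q y) : Q x = ⊥ := by
  have hedge {u w : V} (huw : Γ.Adj u w) : Q u = Q w := by
    obtain ⟨g, rfl, rfl⟩ := hloc.exists_smul_eq_of_adj hxy huw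
    rw [← map_conj_eq_of_isGreatest hA hconn hQ, ← map_conj_eq_of_isGreatest hA hconn hQ, h]
  have hwalk {u w : V} (walk : Γ.Walk u w) : Q u = Q w := by
    induction walk with
    | nil => rfl
    | cons huw _ ih => exact (hedge huw).trans ih
  have hconst (v : V) : Q x = Q v := (hconn x v).elim hwalk
  refine (Subgroup.eq_bot_iff_forall _).mpr fun k hk => Subtype.ext (Equiv.ext fun v => ?_)
  exact ballStab_one_le_stabilizer_self hconn v ((hQ v).1.le (hconst v ▸ hk))

theorem not_le_ballStab_of_isGreatest {n : ℕ} (hloc : IsLocallyOPairs n Γ G) {x y : V}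
    (hxy : Γ.Adj x y) (hp : IsPGroup p ↥(ballStab Γ G x 1 ⊓ ballStab Γ G y 1))
    (hne : ballStab Γ G x 1 ⊓ ballStab Γ G y 1 ≠ ⊥) : ¬ Q y ≤ ballStab Γ G x 1 := by
  intro hle
  have hKQ := ballStab_inf_le_of_isGreatest hA hconn hQ hxy hp
  have hyx : Q y ≤ Q x := (le_inf hle (hQ y).1.le).trans hKQ
  obtain ⟨g, hgx, hgy⟩ := hloc.exists_smul_eq_of_adj hxy hxy.symm
  have hxy' : Q x ≤ Q y :=
    calc Q x = Q (g • y) := by rw [hgy]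
      _ = (Q y).map (MulAut.conj g).toMonoidHom := (map_conj_eq_of_isGreatest hA hconn hQ g y).symm
      _ ≤ (Q x).map (MulAut.conj g).toMonoidHom := Subgroup.map_mono hyx
      _ = Q y := by rw [map_conj_eq_of_isGreatest hA hconn hQ g x, hgx]
  apply hne
  rw [eq_bot_iff, ← eq_bot_of_isGreatest_of_eq hA hconn hQ hloc hxy (le_antisymm hxy' hyx)]
  exact hKQ

end LargestNormalPSubgroup

theorem stmt_10_general {V : Type*} (n : ℕ)
    (Γ : SimpleGraph V) (hconn : Γ.Connected)
    (G : Subgroup (Equiv.Perm V)) (hloc : IsLocallyOPairs n Γ G)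
    (x y : V) (hxy : Γ.Adj x y) (p : ℕ)
    (hnp : (n = 4 ∧ p = 2) ∨ (n = 5 ∧ p = 3) ∨ (n = 6 ∧ p = 2))
    (hne : ballStab Γ G x 1 ⊓ ballStab Γ G y 1 ≠ ⊥)
    (hpgrp : IsPGroup p ↥(ballStab Γ G x 1 ⊓ ballStab Γ G y 1))
    (Q : V → Subgroup G)
    (hQle : ∀ v, Q v ≤ ballStab Γ G v 1)
    (hQp : ∀ v, IsPGroup p (Q v))
    (hQnorm : ∀ v, ∀ g ∈ ballStab Γ G v 1, ∀ k ∈ Q v, g * k * g⁻¹ ∈ Q v)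
    (hQmax : ∀ v, ∀ R : Subgroup G, R ≤ ballStab Γ G v 1 → IsPGroup p R →
      (∀ g ∈ ballStab Γ G v 1, ∀ k ∈ R, g * k * g⁻¹ ∈ R) → R ≤ Q v)
    (Sxy : Subgroup G)
    (hSle : Sxy ≤ MulAction.stabilizer G x ⊓ MulAction.stabilizer G y)
    (hSp : IsPGroup p Sxy)
    (hSnorm : ∀ g ∈ MulAction.stabilizer G x ⊓ MulAction.stabilizer G y,
      ∀ k ∈ Sxy, g * k * g⁻¹ ∈ Sxy)
    (hSmax : ∀ R : Subgroup G, R ≤ MulAction.stabilizer G x ⊓ MulAction.stabilizer G y →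
      IsPGroup p R →
      (∀ g ∈ MulAction.stabilizer G x ⊓ MulAction.stabilizer G y, ∀ k ∈ R, g * k * g⁻¹ ∈ R) →
      R ≤ Sxy) :
    (Sxy : Set G) = (Q x : Set G) * (Q y : Set G) := by
  have hQ (v : V) : IsGreatest {T | IsNormalPSubgroupOf p (ballStab Γ G v 1) T} (Q v) :=
    ⟨⟨hQle v, hQp v, hQnorm v⟩, fun R hR => hQmax v R hR.le hR.isPGroup hR.conj_mem⟩
  have hS : IsGreatest {T | IsNormalPSubgroupOf p (stabilizer G x ⊓ stabilizer G y) T} Sxy :=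
    ⟨⟨hSle, hSp, hSnorm⟩, fun R hR => hSmax R hR.le hR.isPGroup hR.conj_mem⟩
  have hQxN := isNormalPSubgroupOf_stabilizer_inf hloc.1 hconn hQ hxy
  have hQyN : IsNormalPSubgroupOf p (stabilizer G x ⊓ stabilizer G y) (Q y) :=
    inf_comm (stabilizer G y) _ ▸ isNormalPSubgroupOf_stabilizer_inf hloc.1 hconn hQ hxy.symm
  have hSK : Sxy ⊓ ballStab Γ G x 1 ≤ Q x := (hQ x).2 (hS.1.inf (le_inf
    (ballStab_one_le_stabilizer_self hconn x) (ballStab_one_le_stabilizer_of_adj hconn hxy)))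
  obtain ⟨e, φ, hsurj, hφ⟩ := hloc.2.2 x
  apply Set.Subset.antisymm
  · intro s hs
    obtain ⟨r, hr, hsr⟩ := exists_mem_mul_inv_mem_ballStab hφ hconn hsurj hxy hnp hS.1 hQyN
      (not_le_ballStab_of_isGreatest hloc.1 hconn hQ hloc hxy hpgrp hne) hs
    have hsrS : s * r⁻¹ ∈ Sxy := mul_mem hs (inv_mem (hS.2 hQyN hr))
    exact ⟨s * r⁻¹, hSK (Subgroup.mem_inf.mpr ⟨hsrS, hsr⟩), r, hr,
      inv_mul_cancel_right s r⟩
  · rintro _ ⟨a, ha, b, hb, rfl⟩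
    exact mul_mem (hS.2 hQxN ha) (hS.2 hQyN hb)

/-- with `(n,p) ∈ {(4,2),(5,3),(6,2)}`, `G_{xy}^{[1]}` a nontrivial
`p`-group, `Q_v` the largest normal `p`-subgroup of `G_v^{[1]}` (self-centralising in
`G_v^{[1]}`) and `S_{xy}` the largest normal `p`-subgroup of `G_{xy}` (self-centralising
in `G_{xy}`), we have `S_{xy} = Q_x Q_y` (as a product of subgroups). -/
theorem stmt_10 {V : Type*} [Fintype V] (n : ℕ) (hn : 4 ≤ n)
    (Γ : SimpleGraph V) (hconn : Γ.Connected)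
    (G : Subgroup (Equiv.Perm V)) (hloc : IsLocallyOPairs n Γ G)
    (x y : V) (hxy : Γ.Adj x y) (p : ℕ) (hp : p.Prime)
    (hnp : (n = 4 ∧ p = 2) ∨ (n = 5 ∧ p = 3) ∨ (n = 6 ∧ p = 2))
    (hne : ballStab Γ G x 1 ⊓ ballStab Γ G y 1 ≠ ⊥)
    (hpgrp : IsPGroup p ↥(ballStab Γ G x 1 ⊓ ballStab Γ G y 1))
    (Q : V → Subgroup G)
    (hQle : ∀ v, Q v ≤ ballStab Γ G v 1)
    (hQp : ∀ v, IsPGroup p (Q v))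
    (hQnorm : ∀ v, ∀ g ∈ ballStab Γ G v 1, ∀ k ∈ Q v, g * k * g⁻¹ ∈ Q v)
    (hQmax : ∀ v, ∀ R : Subgroup G, R ≤ ballStab Γ G v 1 → IsPGroup p R →
      (∀ g ∈ ballStab Γ G v 1, ∀ k ∈ R, g * k * g⁻¹ ∈ R) → R ≤ Q v)
    (hQcent : ∀ v, ballStab Γ G v 1 ⊓ Subgroup.centralizer (Q v : Set G) ≤ Q v)
    (Sxy : Subgroup G)
    (hSle : Sxy ≤ MulAction.stabilizer G x ⊓ MulAction.stabilizer G y)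
    (hSp : IsPGroup p Sxy)
    (hSnorm : ∀ g ∈ MulAction.stabilizer G x ⊓ MulAction.stabilizer G y,
      ∀ k ∈ Sxy, g * k * g⁻¹ ∈ Sxy)
    (hSmax : ∀ R : Subgroup G, R ≤ MulAction.stabilizer G x ⊓ MulAction.stabilizer G y →
      IsPGroup p R →
      (∀ g ∈ MulAction.stabilizer G x ⊓ MulAction.stabilizer G y, ∀ k ∈ R, g * k * g⁻¹ ∈ R) →
      R ≤ Sxy)
    (hScent : (MulAction.stabilizer G x ⊓ MulAction.stabilizer G y) ⊓
      Subgroup.centralizer (Sxy : Set G) ≤ Sxy) :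
    (Sxy : Set G) = (Q x : Set G) * (Q y : Set G) :=
  stmt_10_general n Γ hconn G hloc x y hxy p hnp hne hpgrp Q hQle hQp hQnorm hQmax Sxy hSle hSp
    hSnorm hSmax
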